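/- arXiv:2205.15566 — 3 statements merged into one kernel-verified Lean document; each statement's English description precedes it below -/
import Mathlib

section
/- Let T be a basic tile of order k and let T' be a basic (resp. Morse) tile of order k', on disjoint vertex sets. Then the join T * T' is a basic (resp. Morse) tile of order k + k'; moreover T * T' is basic if and only if T' is basic. -/
/-!
Common combinatorial framework for Morse shellings of simplicial complexes,
following J.-Y. Welschinger, "Morse shellings out of discrete Morse functions".
-/

namespace MorseShelling

variable {V : Type*} [DecidableEq V] {W : Type*} [DecidableEq W]

/-- A (finite, combinatorial) simplicial complex: a downward-closed collection of
finite subsets (simplices) of the vertex type. -/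
def IsComplex (K : Finset (Finset V)) : Prop :=
  ∀ σ ∈ K, ∀ τ ⊆ σ, τ ∈ K

/-- A relative simplicial complex `S = K \ L`, recorded as the pair `(K, L)`. -/
structure RelCplx (V : Type*) where
  K : Finset (Finset V)
  L : Finset (Finset V)

/-- The faces of a relative simplicial complex. -/
def RelCplx.faces (S : RelCplx V) : Finset (Finset V) := S.K \ S.L

/-- Validity of a relative simplicial complex: both members are complexes and
`L` is a subcomplex of `K`. -/
def RelCplx.IsValid (S : RelCplx V) : Prop :=
  IsComplex S.K ∧ IsComplex S.L ∧ S.L ⊆ S.K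

/-- Join of two collections of faces (on disjoint vertex supports). -/
def joinF (K₁ K₂ : Finset (Finset V)) : Finset (Finset V) :=
  (K₁ ×ˢ K₂).image fun p => p.1 ∪ p.2

/-- Join of two relative simplicial complexes:
`(K₁ * K₂) \ ((L₁ * K₂) ∪ (K₁ * L₂))`. -/
def RelCplx.join (S₁ S₂ : RelCplx V) : RelCplx V :=
  ⟨joinF S₁.K S₂.K, joinF S₁.L S₂.K ∪ joinF S₁.K S₂.L⟩

/-- The star of a simplex `σ` in `K` : all faces `τ` with `σ ∪ τ ∈ K`. -/
def star (K : Finset (Finset V)) (σ : Finset V) : Finset (Finset V) :=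
  K.filter fun τ => σ ∪ τ ∈ K

/-- The link of a simplex `σ` in `K` : all faces `τ` of the star disjoint from `σ`. -/
def link (K : Finset (Finset V)) (σ : Finset V) : Finset (Finset V) :=
  K.filter fun τ => σ ∪ τ ∈ K ∧ σ ∩ τ = ∅

/-- The star of a simplex in a relative complex, `st_S(σ) = st_K(σ) \ st_L(σ)`. -/
def RelCplx.starR (S : RelCplx V) (σ : Finset V) : RelCplx V :=
  ⟨star S.K σ, star S.L σ⟩

/-- The link of a simplex in a relative complex, `lk_S(σ) = lk_K(σ) \ lk_L(σ)`. -/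
def RelCplx.linkR (S : RelCplx V) (σ : Finset V) : RelCplx V :=
  ⟨link S.K σ, link S.L σ⟩

/-- The boundary complex of a simplex: all its proper faces (including `∅`). -/
def boundary (σ : Finset V) : Finset (Finset V) := σ.powerset.erase σ

/-- First barycentric subdivision: the faces are the (possibly empty) flags
`∅ ≠ σ₀ ⊊ σ₁ ⊊ ... ⊊ σ_q` of nonempty faces of `K`, a nonempty face `σ` of `K`
becoming the vertex `σ̂ = σ`. By convention `sd ∅ = ∅`. -/
def sd (K : Finset (Finset V)) : Finset (Finset (Finset V)) :=
  if K = ∅ then ∅ else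
    (K.erase ∅).powerset.filter fun c => ∀ a ∈ c, ∀ b ∈ c, a ⊆ b ∨ b ⊆ a

/-- First barycentric subdivision of a relative complex: `sd (K \ L) = sd K \ sd L`. -/
def RelCplx.sdR (S : RelCplx V) : RelCplx (Finset V) := ⟨sd S.K, sd S.L⟩

/-- An (absolute) simplicial complex seen as a relative one. -/
def toRel (K : Finset (Finset V)) : RelCplx V := ⟨K, ∅⟩

/-- The vertex support of a relative complex. -/
def suppK (S : RelCplx V) : Finset V := S.K.sup id

/-- The ridges (codimension one faces) of a simplex. -/
def ridges (σ : Finset V) : Finset (Finset V) := σ.image fun v => σ.erase v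

/-- The subcomplex of the simplex `σ` consisting of the faces contained in some
member of `R`. -/
def below (σ : Finset V) (R : Finset (Finset V)) : Finset (Finset V) :=
  σ.powerset.filter fun τ => ∃ ρ ∈ R, τ ⊆ ρ

/-- The restriction set of the basic tile `σ \ R`: the face spanned by the
vertices opposite to the missing ridges `R`. -/
def restSet (σ : Finset V) (R : Finset (Finset V)) : Finset V :=
  σ.filter fun v => σ.erase v ∈ R

/-- A basic tile of dimension `n` and order `k`: an `n`-simplex deprived of `k`
of its ridges (together with all the faces contained in them). -/
def IsBasicTile (S : RelCplx V) (n k : ℕ) : Prop :=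
  ∃ σ : Finset V, σ.card = n + 1 ∧ S.K = σ.powerset ∧
    ∃ R ⊆ ridges σ, R.card = k ∧ S.L = below σ R

/-- A Morse tile of dimension `n` and order `k`: a basic tile, possibly further
deprived of a unique face of higher codimension (its Morse face). -/
def IsMorseTile (S : RelCplx V) (n k : ℕ) : Prop :=
  ∃ σ : Finset V, σ.card = n + 1 ∧ S.K = σ.powerset ∧
    ∃ R ⊆ ridges σ, R.card = k ∧
      (S.L = below σ R ∨
        ∃ μ ⊆ σ, μ ∉ below σ R ∧ μ.card + 2 ≤ σ.card ∧
          S.L = below σ R ∪ below σ {μ})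

/-- A critical tile of dimension `n` and index `k`: either a closed simplex
(index `0`), or a basic tile of order `k` deprived of its restriction set
(this includes the dotted simplex for `k = 0` and the open simplex for `k = n`). -/
def IsCriticalTile (S : RelCplx V) (n k : ℕ) : Prop :=
  ∃ σ : Finset V, σ.card = n + 1 ∧ S.K = σ.powerset ∧
    ((k = 0 ∧ S.L = ∅) ∨
      (k ≤ n ∧ ∃ R ⊆ ridges σ, R.card = k ∧
        S.L = below σ R ∪ below σ {restSet σ R}))

/-- A closed simplex, as a tile. -/
def IsClosedSimplexTile (S : RelCplx V) : Prop :=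
  ∃ σ : Finset V, S.K = σ.powerset ∧ S.L = ∅

/-- An open simplex, as a tile: deprived of its whole boundary, incl. the empty face. -/
def IsOpenSimplexTile (S : RelCplx V) : Prop :=
  ∃ σ : Finset V, σ ≠ ∅ ∧ S.K = σ.powerset ∧ S.L = σ.powerset.erase σ

/-- The closed simplex on vertex set `σ`, as a relative complex. -/
def closedT (σ : Finset V) : RelCplx V := ⟨σ.powerset, ∅⟩

/-- The open simplex on vertex set `σ`. -/
def openT (σ : Finset V) : RelCplx V := ⟨σ.powerset, σ.powerset.erase σ⟩

/-- The closed simplex deprived of its empty face, `σ̇` (the neutral tile when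
`σ = ∅`, so that empty factors may be dropped from joins). -/
def dotT (σ : Finset V) : RelCplx V := ⟨σ.powerset, if σ = ∅ then ∅ else {∅}⟩

/-- The Morse tile `σ * θ̊ * τ̇`. -/
def splitTile (σ θ τ : Finset V) : RelCplx V :=
  (closedT σ).join ((openT θ).join (dotT τ))

/-- A tiling of a relative simplicial complex by `N` relative facets: the tiles
are relative simplices whose underlying simplices are facets, and their faces
partition the faces of `S`. -/
structure Tiling (S : RelCplx W) (N : ℕ) where
  tile : Fin N → RelCplx W
  isFacet : ∀ i, ∃ σ ∈ S.K, (∀ τ ∈ S.K, σ ⊆ τ → τ = σ) ∧ (tile i).K = σ.powerset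
  subL : ∀ i, (tile i).L ⊆ (tile i).K
  disj : ∀ i j, i ≠ j → Disjoint (tile i).faces (tile j).faces
  cover : (Finset.univ : Finset (Fin N)).biUnion (fun i => (tile i).faces) = S.faces

/-- The union of the faces of the first `p` tiles of a tiling. -/
def Tiling.prefixFaces {S : RelCplx W} {N : ℕ} (T : Tiling S N) (p : ℕ) :
    Finset (Finset W) :=
  (Finset.univ.filter fun i : Fin N => (i : ℕ) < p).biUnion fun i => (T.tile i).faces

/-- A tiling is a shelling when each of the sets of faces of `S_p = K_p \ L`
is a relative subcomplex, i.e. `L ∪ (tiles of index < p)` is a complex. -/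
def Tiling.IsShelling {S : RelCplx W} {N : ℕ} (T : Tiling S N) : Prop :=
  ∀ p ≤ N, IsComplex (S.L ∪ T.prefixFaces p)

/-- A (shelled) tiling begins with a set `F` of faces when some initial segment
of its tiles partitions exactly `F`. -/
def Tiling.BeginsWith {S : RelCplx W} {N : ℕ} (T : Tiling S N)
    (F : Finset (Finset W)) : Prop :=
  ∃ p ≤ N, T.prefixFaces p = F

/-- A Morse tiling: all tiles are Morse tiles. -/
def Tiling.IsMorse {S : RelCplx W} {N : ℕ} (T : Tiling S N) : Prop :=
  ∀ i, ∃ n k, IsMorseTile (T.tile i) n k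

/-- An h-tiling: all tiles are basic or critical tiles. -/
def Tiling.IsH {S : RelCplx W} {N : ℕ} (T : Tiling S N) : Prop :=
  ∀ i, (∃ n k, IsBasicTile (T.tile i) n k) ∨ (∃ n k, IsCriticalTile (T.tile i) n k)

/-- `f` induces a simplicial isomorphism from `A` onto `B` (both viewed through
their collections of faces). -/
def IsSimplicialIso (f : V → W) (A : Finset (Finset V)) (B : Finset (Finset W)) : Prop :=
  Set.BijOn (fun σ : Finset V => σ.image f) ↑A ↑B

/-- `f` induces an isomorphism of relative simplicial complexes. -/
def IsRelIso (f : V → W) (S : RelCplx V) (S' : RelCplx W) : Prop :=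
  Set.BijOn (fun σ : Finset V => σ.image f) ↑S.K ↑S'.K ∧
    Set.BijOn (fun σ : Finset V => σ.image f) ↑S.L ↑S'.L

/-- The first derived neighborhood `N(L, K)` of a subcomplex `L` in `K` : the union
of the stars in `sd K` of the vertices of `L`. -/
def derivedNbhd (L K : Finset (Finset V)) : Finset (Finset (Finset V)) :=
  (L.filter fun s => s.card = 1).biUnion fun s => star (sd K) {s}

/-- The faces of the derived neighborhood `N(T, S)` of a tile `T` in a relative
complex `S`: the union of the relative stars in `sd S` of the vertices of `T`. -/
def relDerivedNbhd (T S : RelCplx V) : Finset (Finset (Finset V)) :=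
  ((suppK T).biUnion fun v => ((S.sdR).starR {({v} : Finset V)}).faces) ∩ (S.sdR).faces

/-- A discrete Morse function on the finite simplicial complex `K`. -/
def IsDiscreteMorse (K : Finset (Finset V)) (f : Finset V → ℝ) : Prop :=
  ∀ σ ∈ K, σ ≠ ∅ →
    (K.filter fun τ => σ ⊂ τ ∧ f τ ≤ f σ).card ≤ 1 ∧
    (K.filter fun θ => θ ≠ ∅ ∧ θ ⊂ σ ∧ f σ ≤ f θ).card ≤ 1

/-- A critical face of a discrete Morse function. -/
def IsCriticalFace (K : Finset (Finset V)) (f : Finset V → ℝ) (σ : Finset V) : Prop :=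
  σ ∈ K ∧ σ ≠ ∅ ∧ (∀ τ ∈ K, σ ⊂ τ → f σ < f τ) ∧
    ∀ θ ∈ K, θ ≠ ∅ → θ ⊂ σ → f θ < f σ

/-- An elementary collapse: removal of a facet `τ` together with a ridge `θ` of it
contained in no other facet. -/
def ElementaryCollapse (K K' : Finset (Finset V)) : Prop :=
  ∃ τ ∈ K, ∃ θ ∈ K, θ ⊆ τ ∧ τ.card = θ.card + 1 ∧
    (∀ ρ ∈ K, τ ⊆ ρ → ρ = τ) ∧
    (∀ ρ ∈ K, θ ⊆ ρ → ρ = θ ∨ ρ = τ) ∧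
    K' = (K.erase τ).erase θ

/-- A finite simplicial complex is collapsible when some finite sequence of
elementary collapses reduces it to a single vertex. -/
def Collapsible (K : Finset (Finset V)) : Prop :=
  ∃ v : V, Relation.ReflTransGen ElementaryCollapse K {∅, {v}}

lemma mem_joinF {K₁ K₂ : Finset (Finset V)} {s : Finset V} :
    s ∈ joinF K₁ K₂ ↔ ∃ a ∈ K₁, ∃ b ∈ K₂, a ∪ b = s := by
  simp only [joinF, Finset.mem_image, Finset.mem_product, Prod.exists]
  constructor
  · rintro ⟨a, b, ⟨ha, hb⟩, h⟩; exact ⟨a, ha, b, hb, h⟩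
  · rintro ⟨a, ha, b, hb, h⟩; exact ⟨a, b, ⟨ha, hb⟩, h⟩

lemma mem_below {σ τ : Finset V} {R : Finset (Finset V)} :
    τ ∈ below σ R ↔ τ ⊆ σ ∧ ∃ ρ ∈ R, τ ⊆ ρ := by
  simp [below]

lemma mem_ridges {σ ρ : Finset V} : ρ ∈ ridges σ ↔ ∃ v ∈ σ, σ.erase v = ρ := by
  simp [ridges]

lemma ridge_spec {σ ρ : Finset V} (h : ρ ∈ ridges σ) :
    ρ ⊆ σ ∧ ¬ σ ⊆ ρ ∧ ρ.card + 1 = σ.card := by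
  obtain ⟨v, hv, h⟩ := mem_ridges.1 h
  subst h
  exact ⟨Finset.erase_subset _ _, fun hs => (Finset.notMem_erase v σ) (hs hv),
    Finset.card_erase_add_one hv⟩

lemma sup_powerset_id (σ : Finset V) : σ.powerset.sup id = σ := by
  apply le_antisymm
  · exact Finset.sup_le fun s hs => Finset.mem_powerset.1 hs
  · exact Finset.le_sup (f := id) (Finset.mem_powerset_self σ)

lemma joinF_powerset (σ τ : Finset V) :
    joinF σ.powerset τ.powerset = (σ ∪ τ).powerset := by
  ext s
  simp only [mem_joinF, Finset.mem_powerset]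
  constructor
  · rintro ⟨a, ha, b, hb, rfl⟩; exact Finset.union_subset_union ha hb
  · intro hs
    refine ⟨s ∩ σ, Finset.inter_subset_right, s ∩ τ, Finset.inter_subset_right, ?_⟩
    rw [← Finset.inter_union_distrib_left, Finset.inter_eq_left.2 hs]

lemma joinF_union_right (K A B : Finset (Finset V)) :
    joinF K (A ∪ B) = joinF K A ∪ joinF K B := by
  ext s
  simp only [mem_joinF, Finset.mem_union]
  constructor
  · rintro ⟨a, ha, b, hb | hb, rfl⟩
    · exact Or.inl ⟨a, ha, b, hb, rfl⟩
    · exact Or.inr ⟨a, ha, b, hb, rfl⟩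
  · rintro (⟨a, ha, b, hb, rfl⟩ | ⟨a, ha, b, hb, rfl⟩)
    · exact ⟨a, ha, b, Or.inl hb, rfl⟩
    · exact ⟨a, ha, b, Or.inr hb, rfl⟩

lemma joinF_below_left (σ τ : Finset V) (R : Finset (Finset V)) (hR : ∀ ρ ∈ R, ρ ⊆ σ) :
    joinF (below σ R) τ.powerset = below (σ ∪ τ) (R.image (· ∪ τ)) := by
  ext s
  simp only [mem_joinF, mem_below, Finset.mem_powerset, Finset.mem_image]
  constructor
  · rintro ⟨a, ⟨haσ, ρ, hρ, haρ⟩, b, hb, rfl⟩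
    exact ⟨Finset.union_subset_union haσ hb, ρ ∪ τ, ⟨ρ, hρ, rfl⟩,
      Finset.union_subset_union haρ hb⟩
  · rintro ⟨hs, ρ'', ⟨ρ, hρ, rfl⟩, hsρ⟩
    refine ⟨s ∩ ρ, ⟨Finset.inter_subset_right.trans (hR ρ hρ), ρ, hρ,
      Finset.inter_subset_right⟩, s ∩ τ, Finset.inter_subset_right, ?_⟩
    rw [← Finset.inter_union_distrib_left, Finset.inter_eq_left.2 hsρ]

lemma joinF_below_right (σ τ : Finset V) (R : Finset (Finset V)) (hR : ∀ ρ ∈ R, ρ ⊆ τ) :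
    joinF σ.powerset (below τ R) = below (σ ∪ τ) (R.image (σ ∪ ·)) := by
  ext s
  simp only [mem_joinF, mem_below, Finset.mem_powerset, Finset.mem_image]
  constructor
  · rintro ⟨a, ha, b, ⟨hbτ, ρ, hρ, hbρ⟩, rfl⟩
    exact ⟨Finset.union_subset_union ha hbτ, σ ∪ ρ, ⟨ρ, hρ, rfl⟩,
      Finset.union_subset_union ha hbρ⟩
  · rintro ⟨hs, ρ'', ⟨ρ, hρ, rfl⟩, hsρ⟩
    refine ⟨s ∩ σ, Finset.inter_subset_right, s ∩ ρ,
      ⟨Finset.inter_subset_right.trans (hR ρ hρ), ρ, hρ, Finset.inter_subset_right⟩, ?_⟩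
    rw [← Finset.inter_union_distrib_left, Finset.inter_eq_left.2 hsρ]

lemma below_union (σ : Finset V) (R₁ R₂ : Finset (Finset V)) :
    below σ (R₁ ∪ R₂) = below σ R₁ ∪ below σ R₂ := by
  ext s
  simp only [mem_below, Finset.mem_union]
  constructor
  · rintro ⟨hs, ρ, hρ | hρ, hsρ⟩
    · exact Or.inl ⟨hs, ρ, hρ, hsρ⟩
    · exact Or.inr ⟨hs, ρ, hρ, hsρ⟩
  · rintro (⟨hs, ρ, hρ, hsρ⟩ | ⟨hs, ρ, hρ, hsρ⟩)
    · exact ⟨hs, ρ, Or.inl hρ, hsρ⟩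
    · exact ⟨hs, ρ, Or.inr hρ, hsρ⟩

lemma subset_of_subset_union_disjoint {a ρ τ : Finset V} (h : Disjoint a τ)
    (hs : a ⊆ ρ ∪ τ) : a ⊆ ρ := fun x hx =>
  (Finset.mem_union.1 (hs hx)).resolve_right fun hxτ => Finset.disjoint_left.1 h hx hxτ

lemma Rjoin_subset {σ σ' : Finset V} (hdσ : Disjoint σ σ') {R R' : Finset (Finset V)}
    (hR : R ⊆ ridges σ) (hR' : R' ⊆ ridges σ') :
    R.image (· ∪ σ') ∪ R'.image (σ ∪ ·) ⊆ ridges (σ ∪ σ') := by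
  intro s hs
  rcases Finset.mem_union.1 hs with h | h
  · obtain ⟨ρ, hρ, rfl⟩ := Finset.mem_image.1 h
    obtain ⟨v, hv, h⟩ := mem_ridges.1 (hR hρ)
    subst h
    refine mem_ridges.2 ⟨v, Finset.mem_union_left _ hv, ?_⟩
    rw [Finset.erase_union_distrib,
      Finset.erase_eq_of_notMem (Finset.disjoint_left.1 hdσ hv)]
  · obtain ⟨ρ, hρ, rfl⟩ := Finset.mem_image.1 h
    obtain ⟨v, hv, h⟩ := mem_ridges.1 (hR' hρ)
    subst h
    refine mem_ridges.2 ⟨v, Finset.mem_union_right _ hv, ?_⟩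
    rw [Finset.erase_union_distrib,
      Finset.erase_eq_of_notMem (Finset.disjoint_right.1 hdσ hv)]

lemma Rjoin_card {σ σ' : Finset V} (hdσ : Disjoint σ σ') {R R' : Finset (Finset V)}
    (hR : R ⊆ ridges σ) (hR' : R' ⊆ ridges σ') :
    (R.image (· ∪ σ') ∪ R'.image (σ ∪ ·)).card = R.card + R'.card := by
  have hdisj : Disjoint (R.image (· ∪ σ')) (R'.image (σ ∪ ·)) := by
    rw [Finset.disjoint_left]
    rintro s hs hs'
    obtain ⟨ρ, hρ, rfl⟩ := Finset.mem_image.1 hs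
    obtain ⟨ρ', hρ', heq⟩ := Finset.mem_image.1 hs'
    have hσsub : σ ⊆ ρ := by
      refine subset_of_subset_union_disjoint hdσ ?_
      rw [← heq]; exact Finset.subset_union_left
    exact (ridge_spec (hR hρ)).2.1 hσsub
  rw [Finset.card_union_of_disjoint hdisj]
  congr 1
  · apply Finset.card_image_of_injOn
    intro a ha b hb h
    replace h : a ∪ σ' = b ∪ σ' := h
    have haσ := (ridge_spec (hR ha)).1
    have hbσ := (ridge_spec (hR hb)).1
    have h1 : a ⊆ b := by
      refine subset_of_subset_union_disjoint (hdσ.mono_left haσ) ?_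
      rw [← h]; exact Finset.subset_union_left
    have h2 : b ⊆ a := by
      refine subset_of_subset_union_disjoint (hdσ.mono_left hbσ) ?_
      rw [h]; exact Finset.subset_union_left
    exact Finset.Subset.antisymm h1 h2
  · apply Finset.card_image_of_injOn
    intro a ha b hb h
    replace h : σ ∪ a = σ ∪ b := h
    have haσ := (ridge_spec (hR' ha)).1
    have hbσ := (ridge_spec (hR' hb)).1
    have h1 : a ⊆ b := by
      refine subset_of_subset_union_disjoint ((hdσ.symm).mono_left haσ) ?_
      rw [← Finset.union_comm σ b, ← h]
      exact Finset.subset_union_right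
    have h2 : b ⊆ a := by
      refine subset_of_subset_union_disjoint ((hdσ.symm).mono_left hbσ) ?_
      rw [← Finset.union_comm σ a, h]
      exact Finset.subset_union_right
    exact Finset.Subset.antisymm h1 h2

lemma powerset_inj' {σ τ : Finset V} (h : σ.powerset = τ.powerset) : σ = τ := by
  rw [← sup_powerset_id σ, ← sup_powerset_id τ, h]

/-- **Lemma.** If `T` is a basic tile of order `k` and `T'` a basic (resp. Morse)
tile of order `k'`, on disjoint vertex sets, then `T * T'` is a basic
(resp. Morse) tile of order `k + k'`; it is basic if and only if `T'` is basic. -/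
theorem join_of_tiles
    {V : Type*} [DecidableEq V] (T T' : RelCplx V) (n k n' k' : ℕ)
    (hd : Disjoint (suppK T) (suppK T'))
    (hT : IsBasicTile T n k) (hT' : IsMorseTile T' n' k') :
    IsMorseTile (T.join T') (n + n' + 1) (k + k') ∧
    (IsBasicTile T' n' k' → IsBasicTile (T.join T') (n + n' + 1) (k + k')) ∧
    ((∃ m l, IsBasicTile (T.join T') m l) ↔ ∃ m l, IsBasicTile T' m l) := by
  obtain ⟨σ, hσc, hσK, R, hR, hRc, hL⟩ := hT
  obtain ⟨σ', hσ'c, hσ'K, R', hR', hR'c, hL'⟩ := hT'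
  have hdσ : Disjoint σ σ' := by
    rwa [suppK, suppK, hσK, hσ'K, sup_powerset_id, sup_powerset_id] at hd
  have hRsub : ∀ ρ ∈ R, ρ ⊆ σ := fun ρ hρ => (ridge_spec (hR hρ)).1
  have hR'sub : ∀ ρ ∈ R', ρ ⊆ σ' := fun ρ hρ => (ridge_spec (hR' hρ)).1
  have hjK : (T.join T').K = (σ ∪ σ').powerset := by
    show joinF T.K T'.K = _
    rw [hσK, hσ'K, joinF_powerset]
  have hBigc : (σ ∪ σ').card = n + n' + 1 + 1 := by
    rw [Finset.card_union_of_disjoint hdσ, hσc, hσ'c]; omega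
  have hRRsub := Rjoin_subset hdσ hR hR'
  have hRRc : (R.image (· ∪ σ') ∪ R'.image (σ ∪ ·)).card = k + k' := by
    rw [Rjoin_card hdσ hR hR', hRc, hR'c]
  have hjL1 : joinF T.L T'.K = below (σ ∪ σ') (R.image (· ∪ σ')) := by
    rw [hL, hσ'K, joinF_below_left σ σ' R hRsub]
  have bm : ∀ (S : RelCplx V) (m l : ℕ), IsBasicTile S m l → IsMorseTile S m l := by
    rintro S m l ⟨σ₀, h1, h2, R₀, h3, h4, h5⟩
    exact ⟨σ₀, h1, h2, R₀, h3, h4, Or.inl h5⟩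
  have basicJoin : ∀ R₀ : Finset (Finset V), R₀ ⊆ ridges σ' → T'.L = below σ' R₀ →
      IsBasicTile (T.join T') (n + n' + 1) (k + R₀.card) := by
    intro R₀ hR₀ hL₀
    refine ⟨σ ∪ σ', hBigc, hjK, R.image (· ∪ σ') ∪ R₀.image (σ ∪ ·),
      Rjoin_subset hdσ hR hR₀, ?_, ?_⟩
    · rw [Rjoin_card hdσ hR hR₀, hRc]
    · show joinF T.L T'.K ∪ joinF T.K T'.L = _
      rw [hjL1, hL₀, hσK,
        joinF_below_right σ σ' R₀ (fun ρ hρ => (ridge_spec (hR₀ hρ)).1), below_union]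
  rcases hL' with hL'b | ⟨μ, hμσ', hμnb, hμc, hL'm⟩
  · -- T' is basic
    have jb := basicJoin R' hR' hL'b
    rw [hR'c] at jb
    refine ⟨bm _ _ _ jb, fun _ => jb, ?_⟩
    constructor
    · intro _
      exact ⟨n', k', σ', hσ'c, hσ'K, R', hR', hR'c, hL'b⟩
    · intro _
      exact ⟨_, _, jb⟩
  · -- T' has a Morse face μ
    have hμsub' : ∀ ρ ∈ ({μ} : Finset (Finset V)), ρ ⊆ σ' := by
      intro ρ hρ
      rw [Finset.mem_singleton] at hρ
      subst hρ; exact hμσ'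
    have hjL : (T.join T').L =
        below (σ ∪ σ') (R.image (· ∪ σ') ∪ R'.image (σ ∪ ·)) ∪ below (σ ∪ σ') {σ ∪ μ} := by
      show joinF T.L T'.K ∪ joinF T.K T'.L = _
      rw [hjL1, hL'm, hσK, joinF_union_right,
        joinF_below_right σ σ' R' hR'sub,
        joinF_below_right σ σ' {μ} hμsub',
        Finset.image_singleton, below_union, Finset.union_assoc]
    have hMsub : σ ∪ μ ⊆ σ ∪ σ' := Finset.union_subset_union Finset.Subset.rfl hμσ'
    have hμnotin : σ ∪ μ ∉ below (σ ∪ σ') (R.image (· ∪ σ') ∪ R'.image (σ ∪ ·)) := by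
      rw [mem_below]
      rintro ⟨-, ρ'', hρ'', hsub⟩
      rcases Finset.mem_union.1 hρ'' with h | h
      · obtain ⟨ρ, hρ, rfl⟩ := Finset.mem_image.1 h
        have : σ ⊆ ρ := subset_of_subset_union_disjoint hdσ
          ((Finset.subset_union_left).trans hsub)
        exact (ridge_spec (hR hρ)).2.1 this
      · obtain ⟨ρ, hρ, rfl⟩ := Finset.mem_image.1 h
        have hμρ : μ ⊆ ρ := by
          intro x hx
          rcases Finset.mem_union.1 (hsub (Finset.mem_union_right _ hx)) with hxσ | hxρ
          · exact absurd hxσ (Finset.disjoint_right.1 hdσ (hμσ' hx))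
          · exact hxρ
        exact hμnb (mem_below.2 ⟨hμσ', ρ, hρ, hμρ⟩)
    have hdμ : Disjoint σ μ := hdσ.mono_right hμσ'
    have hMcard : (σ ∪ μ).card + 2 ≤ (σ ∪ σ').card := by
      rw [Finset.card_union_of_disjoint hdμ, Finset.card_union_of_disjoint hdσ]
      omega
    have notBasic : ∀ m l : ℕ, ¬ IsBasicTile (T.join T') m l := by
      rintro m l ⟨τ, hτc, hτK, R₀, hR₀, hR₀c, hL₀⟩
      have hτ : τ = σ ∪ σ' := powerset_inj' (hτK.symm.trans hjK)
      subst hτ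
      have hM : σ ∪ μ ∈ (T.join T').L := by
        rw [hjL]
        exact Finset.mem_union_right _
          (mem_below.2 ⟨hMsub, σ ∪ μ, Finset.mem_singleton_self _, Finset.Subset.rfl⟩)
      rw [hL₀, mem_below] at hM
      obtain ⟨-, ρ₀, hρ₀, hMρ₀⟩ := hM
      have hρ₀mem : ρ₀ ∈ below (σ ∪ σ') R₀ :=
        mem_below.2 ⟨(ridge_spec (hR₀ hρ₀)).1, ρ₀, hρ₀, Finset.Subset.rfl⟩
      rw [← hL₀, hjL] at hρ₀mem
      rcases Finset.mem_union.1 hρ₀mem with h | h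
      · obtain ⟨-, ρ, hρ, hsub⟩ := mem_below.1 h
        exact hμnotin (mem_below.2 ⟨hMsub, ρ, hρ, hMρ₀.trans hsub⟩)
      · obtain ⟨-, ρ, hρ, hsub⟩ := mem_below.1 h
        rw [Finset.mem_singleton] at hρ
        subst hρ
        have h1 := Finset.card_le_card hsub
        have h2 := (ridge_spec (hR₀ hρ₀)).2.2
        omega
    refine ⟨⟨σ ∪ σ', hBigc, hjK, R.image (· ∪ σ') ∪ R'.image (σ ∪ ·), hRRsub, hRRc,
      Or.inr ⟨σ ∪ μ, hMsub, hμnotin, by rwa [hBigc] at hMcard ⊢, hjL⟩⟩, ?_, ?_⟩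
    · intro hB'
      obtain ⟨τ', hτ'c, hτ'K, R₀, hR₀, hR₀c, hL₀⟩ := hB'
      have hτ' : τ' = σ' := powerset_inj' (hτ'K.symm.trans hσ'K)
      subst hτ'
      have jb := basicJoin R₀ hR₀ hL₀
      rwa [hR₀c] at jb
    · constructor
      · rintro ⟨m, l, hB⟩
        exact absurd hB (notBasic m l)
      · rintro ⟨m, l, τ', hτ'c, hτ'K, R₀, hR₀, hR₀c, hL₀⟩
        have hτ' : τ' = σ' := powerset_inj' (hτ'K.symm.trans hσ'K)
        subst hτ'
        exact ⟨_, _, basicJoin R₀ hR₀ hL₀⟩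

end MorseShelling
end

section
/- Let K be a finite simplicial complex and σ a nonempty simplex of K. Then the map λ ∈ lk_K(σ) ↦ σ * λ ∈ st_K(σ) induces an isomorphism of simplicial complexes sd(∂σ) * sd(lk_K(σ)) → lk_{sd(K)}(σ̂), where sd(∂σ) = {∅} if dim(σ) = 0 and ∂σ denotes the boundary complex of σ (the complex of proper faces of σ). -/
/-!
Common combinatorial framework for Morse shellings of simplicial complexes,
following J.-Y. Welschinger, "Morse shellings out of discrete Morse functions".
-/

namespace MorseShelling

variable {V : Type*} [DecidableEq V] {W : Type*} [DecidableEq W]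

private lemma mem_sd' {V : Type*} [DecidableEq V] {K : Finset (Finset V)} (hK : K ≠ ∅)
    (c : Finset (Finset V)) :
    c ∈ sd K ↔ (∀ a ∈ c, a ∈ K ∧ a ≠ ∅) ∧ ∀ a ∈ c, ∀ b ∈ c, a ⊆ b ∨ b ⊆ a := by
  simp only [sd, if_neg hK, Finset.mem_filter, Finset.mem_powerset, Finset.subset_iff,
    Finset.mem_erase]
  constructor
  · rintro ⟨h1, h2⟩
    exact ⟨fun a ha => ⟨(h1 ha).2, (h1 ha).1⟩, h2⟩
  · rintro ⟨h1, h2⟩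
    exact ⟨fun a ha => ⟨(h1 a ha).2, (h1 a ha).1⟩, h2⟩

set_option maxHeartbeats 1000000 in
/-- **Proposition (links in the first barycentric subdivision).** For every
nonempty simplex `σ` of `K`, the map `λ ∈ lk_K(σ) ↦ σ * λ` induces an
isomorphism of simplicial complexes `sd(∂σ) * sd(lk_K(σ)) → lk_{sd K}(σ̂)`. -/
theorem link_in_sd
    {V : Type*} [DecidableEq V] (K : Finset (Finset V)) (hK : IsComplex K)
    (σ : Finset V) (hσ : σ ∈ K) (hne : σ ≠ ∅) :
    IsSimplicialIso (fun μ : Finset V => if μ ⊆ σ then μ else σ ∪ μ)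
      (joinF (sd (boundary σ)) (sd (link K σ)))
      (link (sd K) {σ}) := by
  classical
  set F : Finset V → Finset V := fun μ => if μ ⊆ σ then μ else σ ∪ μ with hFdef
  have hemp : (∅ : Finset V) ∈ K := hK σ hσ ∅ (Finset.empty_subset σ)
  have hKne : K ≠ ∅ := Finset.ne_empty_of_mem hσ
  have hbσ : (∅ : Finset V) ∈ boundary σ := by
    simp [boundary, Finset.mem_erase, Ne.symm hne]
  have hbne : boundary σ ≠ ∅ := Finset.ne_empty_of_mem hbσ
  have hlσ : (∅ : Finset V) ∈ link K σ := by
    simp [link, Finset.mem_filter, hemp, hσ]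
  have hlne : link K σ ≠ ∅ := Finset.ne_empty_of_mem hlσ
  -- basic facts about F
  have hF1 : ∀ μ : Finset V, μ ⊆ σ → F μ = μ := fun μ h => if_pos h
  have hnsub : ∀ μ : Finset V, σ ∩ μ = ∅ → μ ≠ ∅ → ¬ μ ⊆ σ := by
    intro μ hd hμ hsub
    exact hμ (by rw [← Finset.inter_eq_right.mpr hsub, hd])
  have hF2 : ∀ μ : Finset V, σ ∩ μ = ∅ → μ ≠ ∅ → F μ = σ ∪ μ := by
    intro μ hd hμ; exact if_neg (hnsub μ hd hμ)
  have hne' : ∀ μ : Finset V, σ ∩ μ = ∅ → μ ≠ ∅ → ¬ σ ∪ μ ⊆ σ := by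
    intro μ hd hμ h
    exact hnsub μ hd hμ (Finset.union_subset_iff.mp h).2
  -- characterization of the two sd factors
  have hA : ∀ a : Finset (Finset V), a ∈ sd (boundary σ) ↔
      (∀ μ ∈ a, μ ⊆ σ ∧ μ ≠ σ ∧ μ ≠ ∅) ∧ ∀ x ∈ a, ∀ y ∈ a, x ⊆ y ∨ y ⊆ x := by
    intro a
    rw [mem_sd' hbne]
    simp only [boundary, Finset.mem_erase, Finset.mem_powerset]
    constructor
    · rintro ⟨h1, h2⟩
      exact ⟨fun μ hμ => ⟨(h1 μ hμ).1.2, (h1 μ hμ).1.1, (h1 μ hμ).2⟩, h2⟩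
    · rintro ⟨h1, h2⟩
      exact ⟨fun μ hμ => ⟨⟨(h1 μ hμ).2.1, (h1 μ hμ).1⟩, (h1 μ hμ).2.2⟩, h2⟩
  have hB : ∀ b : Finset (Finset V), b ∈ sd (link K σ) ↔
      (∀ μ ∈ b, σ ∪ μ ∈ K ∧ σ ∩ μ = ∅ ∧ μ ≠ ∅) ∧ ∀ x ∈ b, ∀ y ∈ b, x ⊆ y ∨ y ⊆ x := by
    intro b
    rw [mem_sd' hlne]
    simp only [link, Finset.mem_filter]
    constructor
    · rintro ⟨h1, h2⟩
      exact ⟨fun μ hμ => ⟨(h1 μ hμ).1.2.1, (h1 μ hμ).1.2.2, (h1 μ hμ).2⟩, h2⟩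
    · rintro ⟨h1, h2⟩
      refine ⟨fun μ hμ => ⟨⟨?_, (h1 μ hμ).1, (h1 μ hμ).2.1⟩, (h1 μ hμ).2.2⟩, h2⟩
      exact hK _ (h1 μ hμ).1 μ Finset.subset_union_right
  -- characterization of the target link
  have hC : ∀ c : Finset (Finset V), c ∈ link (sd K) {σ} ↔
      (∀ τ ∈ c, τ ∈ K ∧ τ ≠ ∅ ∧ (τ ⊆ σ ∨ σ ⊆ τ) ∧ τ ≠ σ) ∧
      ∀ x ∈ c, ∀ y ∈ c, x ⊆ y ∨ y ⊆ x := by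
    intro c
    have hsdne : sd K ≠ ∅ := by
      intro h
      have : ({σ} : Finset (Finset V)) ∈ sd K := by
        rw [mem_sd' hKne]
        exact ⟨by simpa [hne] using hσ, by simp⟩
      rw [h] at this; exact absurd this (Finset.notMem_empty _)
    simp only [link, Finset.mem_filter]
    rw [mem_sd' hKne, mem_sd' hKne]
    constructor
    · rintro ⟨⟨h1, h2⟩, h3, h4⟩
      have hσc : σ ∉ c := by
        intro h
        have : σ ∈ {σ} ∩ c := Finset.mem_inter.mpr ⟨Finset.mem_singleton_self σ, h⟩
        rw [h4] at this; exact absurd this (Finset.notMem_empty _)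
      refine ⟨fun τ hτ => ⟨(h1 τ hτ).1, (h1 τ hτ).2, ?_, fun h => hσc (h ▸ hτ)⟩, h2⟩
      have := h3.2 τ (Finset.mem_union_right _ hτ) σ (Finset.mem_union_left _ (Finset.mem_singleton_self σ))
      tauto
    · rintro ⟨h1, h2⟩
      have hσc : σ ∉ c := fun h => (h1 σ h).2.2.2 rfl
      refine ⟨⟨fun τ hτ => ⟨(h1 τ hτ).1, (h1 τ hτ).2.1⟩, h2⟩, ⟨?_, ?_⟩, ?_⟩
      · intro τ hτ
        rcases Finset.mem_union.mp hτ with h | h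
        · rw [Finset.mem_singleton] at h; exact ⟨h ▸ hσ, h ▸ hne⟩
        · exact ⟨(h1 τ h).1, (h1 τ h).2.1⟩
      · intro x hx y hy
        rcases Finset.mem_union.mp hx with hx' | hx' <;> rcases Finset.mem_union.mp hy with hy' | hy'
        · rw [Finset.mem_singleton] at hx' hy'; subst hx'; subst hy'; left; rfl
        · rw [Finset.mem_singleton] at hx'; subst hx'
          have := (h1 y hy').2.2.1; tauto
        · rw [Finset.mem_singleton] at hy'; subst hy'
          have := (h1 x hx').2.2.1; tauto
        · exact h2 x hx' y hy'
      · exact Finset.singleton_inter_of_notMem hσc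
  -- characterization of the join
  have hJ : ∀ c : Finset (Finset V), c ∈ joinF (sd (boundary σ)) (sd (link K σ)) ↔
      ∃ a b, a ∈ sd (boundary σ) ∧ b ∈ sd (link K σ) ∧ c = a ∪ b := by
    intro c
    simp only [joinF, Finset.mem_image, Finset.mem_product, Prod.exists]
    constructor
    · rintro ⟨a, b, ⟨ha, hb⟩, rfl⟩; exact ⟨a, b, ha, hb, rfl⟩
    · rintro ⟨a, b, ha, hb, rfl⟩; exact ⟨a, b, ⟨ha, hb⟩, rfl⟩
  -- the left inverse
  set G : Finset (Finset V) → Finset (Finset V) := fun c =>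
    (c.filter fun τ => τ ⊆ σ) ∪ ((c.filter fun τ => ¬ τ ⊆ σ).image fun τ => τ \ σ)
    with hGdef
  have hGinv : ∀ c ∈ joinF (sd (boundary σ)) (sd (link K σ)), G (c.image F) = c := by
    intro c hc
    rcases (hJ c).mp hc with ⟨a, b, ha, hb, rfl⟩
    obtain ⟨ha1, _⟩ := (hA a).mp ha
    obtain ⟨hb1, _⟩ := (hB b).mp hb
    ext τ
    simp only [hGdef, Finset.mem_union, Finset.mem_filter, Finset.mem_image]
    constructor
    · rintro (⟨hτ, hτσ⟩ | ⟨ρ, ⟨hρ, hρσ⟩, rfl⟩)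
      · obtain ⟨μ, hμ', rfl⟩ := hτ
        rcases hμ' with hμ' | hμ'
        · rw [hF1 μ (ha1 μ hμ').1]; exact Or.inl hμ'
        · exfalso
          rw [hF2 μ (hb1 μ hμ').2.1 (hb1 μ hμ').2.2] at hτσ
          exact hne' μ (hb1 μ hμ').2.1 (hb1 μ hμ').2.2 hτσ
      · obtain ⟨μ, hμ', rfl⟩ := hρ
        rcases hμ' with hμ' | hμ'
        · exfalso; rw [hF1 μ (ha1 μ hμ').1] at hρσ; exact hρσ (ha1 μ hμ').1
        · rw [hF2 μ (hb1 μ hμ').2.1 (hb1 μ hμ').2.2,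
            Finset.union_sdiff_cancel_left (Finset.disjoint_iff_inter_eq_empty.mpr (hb1 μ hμ').2.1)]
          exact Or.inr hμ'
    · intro hτ
      rcases hτ with hτ' | hτ'
      · left
        exact ⟨⟨τ, Or.inl hτ', hF1 τ (ha1 τ hτ').1⟩,
          (ha1 τ hτ').1⟩
      · right
        refine ⟨σ ∪ τ, ⟨⟨τ, Or.inr hτ',
          hF2 τ (hb1 τ hτ').2.1 (hb1 τ hτ').2.2⟩,
          hne' τ (hb1 τ hτ').2.1 (hb1 τ hτ').2.2⟩, ?_⟩
        exact Finset.union_sdiff_cancel_left (Finset.disjoint_iff_inter_eq_empty.mpr (hb1 τ hτ').2.1)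
  refine ⟨?_, ?_, ?_⟩
  · -- MapsTo
    intro c hc
    rcases (hJ c).mp hc with ⟨a, b, ha, hb, rfl⟩
    obtain ⟨ha1, ha2⟩ := (hA a).mp ha
    obtain ⟨hb1, hb2⟩ := (hB b).mp hb
    show ((a ∪ b).image F) ∈ link (sd K) {σ}
    rw [hC]
    constructor
    · intro τ hτ
      rcases Finset.mem_image.mp hτ with ⟨μ, hμ, rfl⟩
      rcases Finset.mem_union.mp hμ with hμ' | hμ'
      · rw [hF1 μ (ha1 μ hμ').1]
        exact ⟨hK σ hσ μ (ha1 μ hμ').1, (ha1 μ hμ').2.2, Or.inl (ha1 μ hμ').1,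
          (ha1 μ hμ').2.1⟩
      · rw [hF2 μ (hb1 μ hμ').2.1 (hb1 μ hμ').2.2]
        refine ⟨(hb1 μ hμ').1, ?_, Or.inr Finset.subset_union_left, ?_⟩
        · intro h
          exact hne (Finset.subset_empty.mp (h ▸ Finset.subset_union_left))
        · intro h
          exact hne' μ (hb1 μ hμ').2.1 (hb1 μ hμ').2.2 (by rw [h])
    · intro x hx y hy
      rcases Finset.mem_image.mp hx with ⟨μ, hμ, rfl⟩
      rcases Finset.mem_image.mp hy with ⟨ν, hν, rfl⟩
      rcases Finset.mem_union.mp hμ with hμ' | hμ' <;> rcases Finset.mem_union.mp hν with hν' | hν'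
      · rw [hF1 μ (ha1 μ hμ').1, hF1 ν (ha1 ν hν').1]; exact ha2 μ hμ' ν hν'
      · rw [hF1 μ (ha1 μ hμ').1, hF2 ν (hb1 ν hν').2.1 (hb1 ν hν').2.2]
        exact Or.inl ((ha1 μ hμ').1.trans Finset.subset_union_left)
      · rw [hF1 ν (ha1 ν hν').1, hF2 μ (hb1 μ hμ').2.1 (hb1 μ hμ').2.2]
        exact Or.inr ((ha1 ν hν').1.trans Finset.subset_union_left)
      · rw [hF2 μ (hb1 μ hμ').2.1 (hb1 μ hμ').2.2, hF2 ν (hb1 ν hν').2.1 (hb1 ν hν').2.2]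
        rcases hb2 μ hμ' ν hν' with h | h
        · exact Or.inl (Finset.union_subset_union_right h)
        · exact Or.inr (Finset.union_subset_union_right h)
  · -- InjOn
    intro c1 h1 c2 h2 heq
    have e1 := hGinv c1 h1
    have e2 := hGinv c2 h2
    simp only [Set.mem_setOf_eq] at heq
    rw [← e1, ← e2, heq]
  · -- SurjOn
    intro c hc
    obtain ⟨hc1, hc2⟩ := (hC c).mp (by exact hc)
    set a : Finset (Finset V) := c.filter fun τ => τ ⊆ σ with hadef
    set b : Finset (Finset V) := (c.filter fun τ => ¬ τ ⊆ σ).image fun τ => τ \ σ with hbdef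
    have hstrict : ∀ τ ∈ c, ¬ τ ⊆ σ → σ ⊆ τ := by
      intro τ hτ h
      rcases (hc1 τ hτ).2.2.1 with h' | h'
      · exact absurd h' h
      · exact h'
    have ha : a ∈ sd (boundary σ) := by
      rw [hA]
      constructor
      · intro μ hμ
        rw [hadef, Finset.mem_filter] at hμ
        exact ⟨hμ.2, (hc1 μ hμ.1).2.2.2, (hc1 μ hμ.1).2.1⟩
      · intro x hx y hy
        rw [hadef, Finset.mem_filter] at hx hy
        exact hc2 x hx.1 y hy.1
    have hb : b ∈ sd (link K σ) := by
      rw [hB]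
      constructor
      · intro μ hμ
        rw [hbdef, Finset.mem_image] at hμ
        obtain ⟨τ, hτ, rfl⟩ := hμ
        rw [Finset.mem_filter] at hτ
        have hsub := hstrict τ hτ.1 hτ.2
        refine ⟨?_, Finset.inter_sdiff_self σ τ, ?_⟩
        · rw [Finset.union_sdiff_of_subset hsub]; exact (hc1 τ hτ.1).1
        · intro h
          exact hτ.2 (Finset.sdiff_eq_empty_iff_subset.mp h)
      · intro x hx y hy
        rw [hbdef, Finset.mem_image] at hx hy
        obtain ⟨τ, hτ, rfl⟩ := hx
        obtain ⟨ρ, hρ, rfl⟩ := hy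
        rw [Finset.mem_filter] at hτ hρ
        rcases hc2 τ hτ.1 ρ hρ.1 with h | h
        · exact Or.inl (Finset.sdiff_subset_sdiff h (Finset.Subset.refl _))
        · exact Or.inr (Finset.sdiff_subset_sdiff h (Finset.Subset.refl _))
    refine ⟨a ∪ b, ?_, ?_⟩
    · exact (hJ _).mpr ⟨a, b, ha, hb, rfl⟩
    · show (a ∪ b).image F = c
      ext τ
      constructor
      · intro hτ
        rcases Finset.mem_image.mp hτ with ⟨μ, hμ, rfl⟩
        rcases Finset.mem_union.mp hμ with hμ' | hμ'
        · rw [hadef, Finset.mem_filter] at hμ'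
          rw [hF1 μ hμ'.2]; exact hμ'.1
        · rw [hbdef, Finset.mem_image] at hμ'
          obtain ⟨ρ, hρ, rfl⟩ := hμ'
          rw [Finset.mem_filter] at hρ
          have hsub := hstrict ρ hρ.1 hρ.2
          rw [hF2 _ (Finset.inter_sdiff_self σ ρ) (fun h => hρ.2 (Finset.sdiff_eq_empty_iff_subset.mp h)),
            Finset.union_sdiff_of_subset hsub]
          exact hρ.1
      · intro hτ
        by_cases hτσ : τ ⊆ σ
        · refine Finset.mem_image.mpr ⟨τ, Finset.mem_union_left _ ?_, hF1 τ hτσ⟩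
          rw [hadef, Finset.mem_filter]; exact ⟨hτ, hτσ⟩
        · have hsub := hstrict τ hτ hτσ
          refine Finset.mem_image.mpr ⟨τ \ σ, Finset.mem_union_right _ ?_, ?_⟩
          · rw [hbdef, Finset.mem_image]
            exact ⟨τ, Finset.mem_filter.mpr ⟨hτ, hτσ⟩, rfl⟩
          · rw [hF2 _ (Finset.inter_sdiff_self σ τ) (fun h => hτσ (Finset.sdiff_eq_empty_iff_subset.mp h)),
              Finset.union_sdiff_of_subset hsub]

end MorseShelling
end

section
/- Let K be a finite simplicial complex and v1 ≠ v2 two distinct vertices of K. Then st_{sd(K)}(v̂1) ∩ st_{sd(K)}(v̂2) = lk_{sd(K)}(v̂1) ∩ lk_{sd(K)}(v̂2), and this intersection is nonempty if and only if {v1, v2} is an edge of K; in that case the intersection is the image of st_{sd(lk_K(v1))}(v̂2) in lk_{sd(K)}(v̂1) (resp. of st_{sd(lk_K(v2))}(v̂1) in lk_{sd(K)}(v̂2)) under the isomorphism sd(lk_K(v1)) → lk_{sd(K)}(v̂1) induced by λ ↦ v1 * λ (resp. sd(lk_K(v2)) → lk_{sd(K)}(v̂2) induced by λ ↦ v2 *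 λ). -/
/-!
Common combinatorial framework for Morse shellings of simplicial complexes,
following J.-Y. Welschinger, "Morse shellings out of discrete Morse functions".
-/

namespace MorseShelling

variable {V : Type*} [DecidableEq V] {W : Type*} [DecidableEq W]

section Aux

variable {V : Type*} [DecidableEq V]

lemma mem_sd_iff {K : Finset (Finset V)} (hK : K ≠ ∅) {c : Finset (Finset V)} :
    c ∈ sd K ↔ (∀ a ∈ c, a ∈ K ∧ a ≠ ∅) ∧ (∀ a ∈ c, ∀ b ∈ c, a ⊆ b ∨ b ⊆ a) := by
  rw [sd, if_neg hK, Finset.mem_filter, Finset.mem_powerset]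
  constructor
  · rintro ⟨hsub, hch⟩
    refine ⟨fun a ha => ?_, hch⟩
    have := hsub ha
    rw [Finset.mem_erase] at this
    exact ⟨this.2, this.1⟩
  · rintro ⟨h1, h2⟩
    exact ⟨fun a ha => Finset.mem_erase.2 ⟨(h1 a ha).2, (h1 a ha).1⟩, h2⟩

lemma mem_star_sd_iff {K : Finset (Finset V)} {v : V} (hv : {v} ∈ K)
    {c : Finset (Finset V)} :
    c ∈ star (sd K) {{v}} ↔ c ∈ sd K ∧ ∀ a ∈ c, v ∈ a := by
  have hKne : K ≠ ∅ := Finset.ne_empty_of_mem hv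
  rw [star, Finset.mem_filter]
  constructor
  · rintro ⟨hc, hu⟩
    refine ⟨hc, fun a ha => ?_⟩
    rw [mem_sd_iff hKne] at hu
    have h1 := hu.1 a (by simp [ha])
    have h2 := hu.2 {v} (by simp) a (by simp [ha])
    rcases h2 with h | h
    · exact h (by simp)
    · rw [Finset.subset_singleton_iff] at h
      rcases h with h | h
      · exact absurd h h1.2
      · simp [h]
  · rintro ⟨hc, hmem⟩
    refine ⟨hc, ?_⟩
    rw [mem_sd_iff hKne] at hc ⊢
    constructor
    · intro a ha
      rcases Finset.mem_union.1 ha with ha | ha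
      · simp only [Finset.mem_singleton] at ha
        subst ha; exact ⟨hv, by simp⟩
      · exact hc.1 a ha
    · intro a ha b hb
      rcases Finset.mem_union.1 ha with ha | ha <;>
        rcases Finset.mem_union.1 hb with hb | hb
      · simp only [Finset.mem_singleton] at ha hb; subst ha; subst hb; left; rfl
      · simp only [Finset.mem_singleton] at ha; subst ha
        left; simp [Finset.singleton_subset_iff, hmem b hb]
      · simp only [Finset.mem_singleton] at hb; subst hb
        right; simp [Finset.singleton_subset_iff, hmem a ha]
      · exact hc.2 a ha b hb

lemma mem_link_sd_iff {K : Finset (Finset V)} {v : V}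
    {c : Finset (Finset V)} :
    c ∈ link (sd K) {{v}} ↔ c ∈ star (sd K) {{v}} ∧ {v} ∉ c := by
  rw [link, star, Finset.mem_filter, Finset.mem_filter]
  have : ({{v}} : Finset (Finset V)) ∩ c = ∅ ↔ {v} ∉ c := by
    constructor
    · intro h hm
      have : ({v} : Finset V) ∈ ({{v}} : Finset (Finset V)) ∩ c := by
        simp [hm]
      rw [h] at this; exact absurd this (by simp)
    · intro h
      rw [Finset.eq_empty_iff_forall_notMem]
      intro x hx
      rcases Finset.mem_inter.1 hx with ⟨hx1, hx2⟩
      simp only [Finset.mem_singleton] at hx1; subst hx1; exact h hx2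
  rw [this]
  tauto

/-- Main auxiliary lemma: over an edge `{v, w}`, the intersection of the stars
of `v̂` and `ŵ` in `sd K` is the image of `st_{sd(lk_K v)}(ŵ)` under `λ ↦ v * λ`. -/
lemma star_inter_eq_image (K : Finset (Finset V)) (hK : IsComplex K)
    (v w : V) (hvw : v ≠ w) (he : {v, w} ∈ K) :
    star (sd K) {{v}} ∩ star (sd K) {{w}} =
      Finset.image (Finset.image fun μ : Finset V =>
          if μ ⊆ ({v} : Finset V) then μ else {v} ∪ μ)
        (star (sd (link K {v})) {{w}}) := by
  have hv : {v} ∈ K := hK _ he _ (by simp [Finset.singleton_subset_iff])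
  have hw : {w} ∈ K := hK _ he _ (by simp [Finset.singleton_subset_iff])
  have hKne : K ≠ ∅ := Finset.ne_empty_of_mem hv
  have hwL : ({w} : Finset V) ∈ link K {v} := by
    rw [link, Finset.mem_filter]
    refine ⟨hw, by simpa using he, ?_⟩
    rw [Finset.eq_empty_iff_forall_notMem]
    intro x hx
    rcases Finset.mem_inter.1 hx with ⟨hx1, hx2⟩
    simp only [Finset.mem_singleton] at hx1 hx2
    exact hvw (hx1.symm ▸ hx2 ▸ rfl)
  have hLne : link K {v} ≠ ∅ := Finset.ne_empty_of_mem hwL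
  have hmemL : ∀ μ : Finset V, μ ∈ link K {v} ↔
      μ ∈ K ∧ {v} ∪ μ ∈ K ∧ v ∉ μ := by
    intro μ
    rw [link, Finset.mem_filter]
    constructor
    · rintro ⟨h1, h2, h3⟩
      refine ⟨h1, h2, fun hm => ?_⟩
      have : v ∈ ({v} : Finset V) ∩ μ := by simp [hm]
      rw [h3] at this; exact absurd this (by simp)
    · rintro ⟨h1, h2, h3⟩
      refine ⟨h1, h2, ?_⟩
      rw [Finset.eq_empty_iff_forall_notMem]
      intro x hx
      rcases Finset.mem_inter.1 hx with ⟨hx1, hx2⟩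
      simp only [Finset.mem_singleton] at hx1; subst hx1; exact h3 hx2
  ext c
  rw [Finset.mem_inter, Finset.mem_image, mem_star_sd_iff hv, mem_star_sd_iff hw]
  constructor
  · rintro ⟨⟨hc, hcv⟩, _, hcw⟩
    rw [mem_sd_iff hKne] at hc
    refine ⟨c.image (fun a => a.erase v), ?_, ?_⟩
    · rw [mem_star_sd_iff hwL, mem_sd_iff hLne]
      refine ⟨⟨?_, ?_⟩, ?_⟩
      · intro μ hμ
        rcases Finset.mem_image.1 hμ with ⟨a, ha, rfl⟩
        have haK := (hc.1 a ha).1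
        have hva := hcv a ha
        have hwa := hcw a ha
        constructor
        · rw [hmemL]
          refine ⟨hK a haK _ (Finset.erase_subset _ _), ?_, Finset.notMem_erase _ _⟩
          rw [← Finset.insert_eq, Finset.insert_erase hva]
          exact haK
        · intro h
          have : w ∈ a.erase v := Finset.mem_erase.2 ⟨fun hh => hvw (hh ▸ rfl), hwa⟩
          rw [h] at this; exact absurd this (by simp)
      · intro μ hμ ν hν
        rcases Finset.mem_image.1 hμ with ⟨a, ha, rfl⟩
        rcases Finset.mem_image.1 hν with ⟨b, hb, rfl⟩
        rcases hc.2 a ha b hb with h | h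
        · exact Or.inl (Finset.erase_subset_erase _ h)
        · exact Or.inr (Finset.erase_subset_erase _ h)
      · intro μ hμ
        rcases Finset.mem_image.1 hμ with ⟨a, ha, rfl⟩
        exact Finset.mem_erase.2 ⟨fun hh => hvw (hh ▸ rfl), hcw a ha⟩
    · rw [Finset.image_image]
      have : ∀ a ∈ c,
          ((fun μ : Finset V => if μ ⊆ ({v} : Finset V) then μ else {v} ∪ μ) ∘
            (fun a => a.erase v)) a = id a := by
        intro a ha
        have hva := hcv a ha
        have hwa : w ∈ a.erase v :=
          Finset.mem_erase.2 ⟨fun hh => hvw (hh ▸ rfl), hcw a ha⟩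
        have hns : ¬ a.erase v ⊆ ({v} : Finset V) := by
          intro h
          have := h hwa
          simp only [Finset.mem_singleton] at this
          exact hvw this.symm
        simp only [Function.comp, if_neg hns, id]
        rw [← Finset.insert_eq, Finset.insert_erase hva]
      rw [Finset.image_congr this, Finset.image_id]
  · rintro ⟨d, hd, rfl⟩
    rw [mem_star_sd_iff hwL, mem_sd_iff hLne] at hd
    obtain ⟨⟨hdL, hdchain⟩, hdw⟩ := hd
    have hf : ∀ μ ∈ d,
        (if μ ⊆ ({v} : Finset V) then μ else {v} ∪ μ) = {v} ∪ μ := by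
      intro μ hμ
      have hns : ¬ μ ⊆ ({v} : Finset V) := by
        intro h
        have := h (hdw μ hμ)
        simp only [Finset.mem_singleton] at this
        exact hvw this.symm
      rw [if_neg hns]
    have hsd : d.image (fun μ : Finset V =>
        if μ ⊆ ({v} : Finset V) then μ else {v} ∪ μ) ∈ sd K := by
      rw [mem_sd_iff hKne]
      constructor
      · intro a ha
        rcases Finset.mem_image.1 ha with ⟨μ, hμ, rfl⟩
        rw [hf μ hμ]
        have := (hmemL μ).1 (hdL μ hμ).1
        exact ⟨this.2.1, by simp [← Finset.insert_eq]⟩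
      · intro a ha b hb
        rcases Finset.mem_image.1 ha with ⟨μ, hμ, rfl⟩
        rcases Finset.mem_image.1 hb with ⟨ν, hν, rfl⟩
        rw [hf μ hμ, hf ν hν]
        rcases hdchain μ hμ ν hν with h | h
        · exact Or.inl (Finset.union_subset_union_right h)
        · exact Or.inr (Finset.union_subset_union_right h)
    refine ⟨⟨hsd, ?_⟩, hsd, ?_⟩
    · intro a ha
      rcases Finset.mem_image.1 ha with ⟨μ, hμ, rfl⟩
      rw [hf μ hμ]
      simp
    · intro a ha
      rcases Finset.mem_image.1 ha with ⟨μ, hμ, rfl⟩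
      rw [hf μ hμ]
      simp [hdw μ hμ]

end Aux

/-- **Proposition.** For distinct vertices `v₁ ≠ v₂` of `K`,
`st_{sd K}(v̂₁) ∩ st_{sd K}(v̂₂) = lk_{sd K}(v̂₁) ∩ lk_{sd K}(v̂₂)`; it contains a
nonempty simplex iff `{v₁, v₂}` is an edge of `K`, in which case it is the image
of `st_{sd(lk_K(v₁))}(v̂₂)` (resp. `st_{sd(lk_K(v₂))}(v̂₁)`) under the isomorphism
induced by `λ ↦ v₁ * λ` (resp. `λ ↦ v₂ * λ`). -/
theorem stars_intersection_in_sd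
    {V : Type*} [DecidableEq V] (K : Finset (Finset V)) (hK : IsComplex K)
    (v₁ v₂ : V) (h₁ : {v₁} ∈ K) (h₂ : {v₂} ∈ K) (hne : v₁ ≠ v₂) :
    star (sd K) {{v₁}} ∩ star (sd K) {{v₂}} =
      link (sd K) {{v₁}} ∩ link (sd K) {{v₂}} ∧
    ((∃ c ∈ star (sd K) {{v₁}} ∩ star (sd K) {{v₂}}, c ≠ ∅) ↔ {v₁, v₂} ∈ K) ∧
    ({v₁, v₂} ∈ K →
      star (sd K) {{v₁}} ∩ star (sd K) {{v₂}} =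
        Finset.image
          (Finset.image fun μ : Finset V =>
            if μ ⊆ ({v₁} : Finset V) then μ else {v₁} ∪ μ)
          (star (sd (link K {v₁})) {{v₂}}) ∧
      star (sd K) {{v₁}} ∩ star (sd K) {{v₂}} =
        Finset.image
          (Finset.image fun μ : Finset V =>
            if μ ⊆ ({v₂} : Finset V) then μ else {v₂} ∪ μ)
          (star (sd (link K {v₂})) {{v₁}})) := by
  have hKne : K ≠ ∅ := Finset.ne_empty_of_mem h₁
  refine ⟨?_, ?_, ?_⟩
  · ext c
    rw [Finset.mem_inter, Finset.mem_inter, mem_link_sd_iff, mem_link_sd_iff]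
    constructor
    · rintro ⟨hc1, hc2⟩
      have h1m := (mem_star_sd_iff h₁).1 hc1
      have h2m := (mem_star_sd_iff h₂).1 hc2
      refine ⟨⟨hc1, fun hm => ?_⟩, hc2, fun hm => ?_⟩
      · have := h2m.2 _ hm
        simp only [Finset.mem_singleton] at this
        exact hne this.symm
      · have := h1m.2 _ hm
        simp only [Finset.mem_singleton] at this
        exact hne this
    · rintro ⟨hc1, hc2⟩
      exact ⟨hc1.1, hc2.1⟩
  · constructor
    · rintro ⟨c, hc, hcne⟩
      rw [Finset.mem_inter, mem_star_sd_iff h₁, mem_star_sd_iff h₂] at hc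
      obtain ⟨a, ha⟩ := Finset.nonempty_iff_ne_empty.2 hcne
      have haK := ((mem_sd_iff hKne).1 hc.1.1).1 a ha
      exact hK a haK.1 _ (Finset.insert_subset (hc.1.2 a ha)
        (Finset.singleton_subset_iff.2 (hc.2.2 a ha)))
    · intro he
      refine ⟨{({v₁, v₂} : Finset V)}, ?_, by simp⟩
      rw [Finset.mem_inter, mem_star_sd_iff h₁, mem_star_sd_iff h₂, mem_sd_iff hKne]
      refine ⟨⟨⟨?_, ?_⟩, ?_⟩, ⟨⟨?_, ?_⟩, ?_⟩⟩ <;>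
        simp_all [Finset.insert_ne_empty]
  · intro he
    constructor
    · exact star_inter_eq_image K hK v₁ v₂ hne he
    · rw [Finset.inter_comm]
      exact star_inter_eq_image K hK v₂ v₁ hne.symm (by rwa [Finset.pair_comm])

end MorseShelling
end
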